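/- arXiv:2108.10461 — 5 statements merged into one kernel-verified Lean document; each statement's English description precedes it below -/
import Mathlib

section
/- Let G be a graph and H ⊆ E(G) a (β,λ,δ)-damaged EDCS of G with damaged vertex set V_D, where ε < 1/2, λ ≤ ε/32, and β ≥ 8λ^{-2}·log(1/λ). Then μ(G) ≤ (3/2 + ε)·μ(H) + δ·|V|, assuming the EDCS approximation lemma: any (β,λ)-EDCS H' of a graph G' with these parameters satisfies μ(G') ≤ (3/2+ε)·μ(H'). -/
/-- Degree of a vertex `v` in an edge set `E`. -/
def degE {V : Type*} [Fintype V] [DecidableEq V] (E : Finset (Sym2 V)) (v : V) : ℕ :=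
  (E.filter (fun e => v ∈ e)).card

/-- A finite set of edges forms a matching: no loops and no two distinct edges share a vertex. -/
def IsMatching {V : Type*} [Fintype V] [DecidableEq V] (M : Finset (Sym2 V)) : Prop :=
  (∀ e ∈ M, ¬ e.IsDiag) ∧ ∀ e ∈ M, ∀ f ∈ M, e ≠ f → ∀ v : V, ¬ (v ∈ e ∧ v ∈ f)

instance {V : Type*} [Fintype V] [DecidableEq V] :
    DecidablePred (IsMatching (V := V)) := fun M => by
  unfold IsMatching; infer_instance

/-- Maximum matching size of the graph with edge set `E`. -/
def matchNum {V : Type*} [Fintype V] [DecidableEq V] (E : Finset (Sym2 V)) : ℕ :=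
  Finset.sup (E.powerset.filter (fun M => IsMatching M)) Finset.card

/-- a `(β,λ,δ)`-damaged EDCS `H` of `G` satisfies
`μ(G) ≤ (3/2 + ε)·μ(H) + δ·|V|`, assuming the standard EDCS approximation lemma. -/
theorem stmt1 {V : Type*} [Fintype V] [DecidableEq V]
    (E H : Finset (Sym2 V)) (VD : Finset V) (β lam δ ε : ℝ)
    (hε : ε < 1 / 2) (hlam : lam ≤ ε / 32)
    (hβ : β ≥ 8 * lam⁻¹ ^ 2 * Real.log (1 / lam))
    (hHE : H ⊆ E)
    (hVDcard : (VD.card : ℝ) ≤ δ * Fintype.card V)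
    (hdegH : ∀ u v : V, s(u, v) ∈ H → (degE H u + degE H v : ℝ) ≤ β)
    (hdegE : ∀ u v : V, s(u, v) ∈ E \ H → u ∉ VD → v ∉ VD →
      (degE H u + degE H v : ℝ) ≥ β * (1 - lam))
    (hEDCS : ∀ E' H' : Finset (Sym2 V), H' ⊆ E' →
      (∀ u v : V, s(u, v) ∈ H' → (degE H' u + degE H' v : ℝ) ≤ β) →
      (∀ u v : V, s(u, v) ∈ E' \ H' → (degE H' u + degE H' v : ℝ) ≥ β * (1 - lam)) →
      (matchNum E' : ℝ) ≤ (3 / 2 + ε) * matchNum H') :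
    (matchNum E : ℝ) ≤ (3 / 2 + ε) * matchNum H + δ * Fintype.card V := by
  classical
  set E' : Finset (Sym2 V) := H ∪ E.filter (fun e => ∀ v ∈ VD, v ∉ e) with hE'
  have hHE' : H ⊆ E' := Finset.subset_union_left
  have hkey : (matchNum E' : ℝ) ≤ (3 / 2 + ε) * matchNum H := by
    apply hEDCS E' H hHE' hdegH
    intro u v hmem
    rw [Finset.mem_sdiff] at hmem
    obtain ⟨h1, h2⟩ := hmem
    rw [hE', Finset.mem_union] at h1
    rcases h1 with h | h
    · exact absurd h h2
    · rw [Finset.mem_filter] at h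
      exact hdegE u v (Finset.mem_sdiff.mpr ⟨h.1, h2⟩)
        (fun hu => h.2 u hu (by simp)) (fun hv => h.2 v hv (by simp))
  have hmain : matchNum E ≤ matchNum E' + VD.card := by
    obtain ⟨M, hM, hMcard⟩ : ∃ M ∈ (E.powerset.filter (fun M => IsMatching M)),
        M.card = matchNum E := by
      obtain ⟨M, hM, hs⟩ := Finset.exists_mem_eq_sup
        (E.powerset.filter (fun M => IsMatching M)) ⟨∅, by simp [IsMatching]⟩ Finset.card
      exact ⟨M, hM, hs.symm⟩
    rw [Finset.mem_filter, Finset.mem_powerset] at hM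
    obtain ⟨hME, hMm⟩ := hM
    set M' := M.filter (fun e => e ∈ E') with hM'def
    set R := M.filter (fun e => e ∉ E') with hRdef
    have hsplit : M'.card + R.card = M.card :=
      Finset.card_filter_add_card_filter_not _
    have hex : ∀ e ∈ R, ∃ v ∈ VD, v ∈ e := by
      intro e he
      have he' := Finset.mem_filter.mp he
      by_contra hc
      push_neg at hc
      exact he'.2 (Finset.mem_union_right _
        (Finset.mem_filter.mpr ⟨hME he'.1, fun v hv => hc v hv⟩))
    have hRcard : R.card ≤ VD.card := by
      apply Finset.card_le_card_of_injOn
        (fun e => if h : ∃ v ∈ VD, v ∈ e then h.choose else (Quot.out e).1)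
      · intro e he
        have h := hex e he
        simp only [dif_pos h]
        exact h.choose_spec.1
      · intro e he f hf hef
        by_contra hne
        have h1 := hex e he
        have h2 := hex f hf
        simp only [dif_pos h1, dif_pos h2] at hef
        have heM : e ∈ M := (Finset.mem_filter.mp he).1
        have hfM : f ∈ M := (Finset.mem_filter.mp hf).1
        exact hMm.2 e heM f hfM hne h1.choose ⟨h1.choose_spec.2, hef ▸ h2.choose_spec.2⟩
    have hM'le : M'.card ≤ matchNum E' := by
      apply Finset.le_sup
      rw [Finset.mem_filter, Finset.mem_powerset]
      refine ⟨fun e he => (Finset.mem_filter.mp he).2, ?_, ?_⟩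
      · intro e he
        exact hMm.1 e (Finset.mem_filter.mp he).1
      · intro e he f hf
        exact hMm.2 e (Finset.mem_filter.mp he).1 f (Finset.mem_filter.mp hf).1
    omega
  calc (matchNum E : ℝ) ≤ (matchNum E' : ℝ) + VD.card := by exact_mod_cast hmain
    _ ≤ (3 / 2 + ε) * matchNum H + δ * Fintype.card V := add_le_add hkey hVDcard
end

section
/- Let G_exp = ((V,R),E') be a bipartite (2k, d, ε/2)-expander with left vertex set V. For each v ∈ V fix an ordering of its d neighbors, and for i ∈ [d] and r ∈ R let V_{i,r} = {v ∈ V : the i-th neighbor of v is r}. Then the collection of partitionings {V_i = {V_{i,r} : r ∈ R} : i ∈ [d]} of V is (k,ε) matching preserving for any graph G on vertex set V: for every matching M of size k in G there exists i ∈ [d] such that the concatenation of G based on V_i has a matching of size at least (1−ε)·k. -/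
namespace Sym2

variable {α β : Type*} {g : α → β} {s : Set α}

lemma eq_of_map_eq_map_of_injOn (hg : Set.InjOn g s) {e f : Sym2 α} (he : ∀ v ∈ e, v ∈ s)
    (hf : ∀ v ∈ f, v ∈ s) (h : e.map g = f.map g) : e = f := by
  induction e using Sym2.ind with | _ a b =>
  induction f using Sym2.ind with | _ c d =>
  simp only [Sym2.mem_iff, forall_eq_or_imp, forall_eq] at he hf
  rw [Sym2.map_mk, Sym2.map_mk, Sym2.eq_iff] at h
  rw [Sym2.eq_iff]
  rcases h with ⟨hac, hbd⟩ | ⟨had, hbc⟩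
  · exact Or.inl ⟨hg he.1 hf.1 hac, hg he.2 hf.2 hbd⟩
  · exact Or.inr ⟨hg he.1 hf.2 had, hg he.2 hf.1 hbc⟩

lemma not_isDiag_map_of_injOn (hg : Set.InjOn g s) {e : Sym2 α} (he : ∀ v ∈ e, v ∈ s)
    (hnd : ¬ e.IsDiag) : ¬ (e.map g).IsDiag := by
  induction e using Sym2.ind with | _ a b =>
  simp only [Sym2.mem_iff, forall_eq_or_imp, forall_eq] at he
  rw [Sym2.mk_isDiag_iff] at hnd
  rw [Sym2.map_mk, Sym2.mk_isDiag_iff]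
  exact fun h => hnd (hg he.1 he.2 h)

lemma card_image_map_of_injOn [DecidableEq β] (hg : Set.InjOn g s) {M : Finset (Sym2 α)}
    (hMs : ∀ e ∈ M, ∀ v ∈ e, v ∈ s) : (M.image (Sym2.map g)).card = M.card :=
  Finset.card_image_of_injOn fun _ he _ hf => eq_of_map_eq_map_of_injOn hg (hMs _ he) (hMs _ hf)

end Sym2

open Finset

namespace IsMatching

variable {V : Type*} [Fintype V] [DecidableEq V] {M N E : Finset (Sym2 V)}

lemma mono (hM : IsMatching M) (hNM : N ⊆ M) : IsMatching N :=
  ⟨fun e he => hM.1 e (hNM he), fun e he f hf => hM.2 e (hNM he) f (hNM hf)⟩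

lemma card_le_matchNum (hM : IsMatching M) (hME : M ⊆ E) : M.card ≤ matchNum E :=
  le_sup (mem_filter.mpr ⟨mem_powerset.mpr hME, hM⟩)

lemma card_biUnion_toFinset (hM : IsMatching M) :
    (M.biUnion Sym2.toFinset).card = 2 * M.card := by
  rw [card_biUnion, sum_congr rfl fun e he => Sym2.card_toFinset_of_not_isDiag e (hM.1 e he),
    sum_const, smul_eq_mul, mul_comm]
  intro e he f hf hef
  rw [Function.onFun, disjoint_left]
  exact fun v hve hvf =>
    hM.2 e he f hf hef v ⟨Sym2.mem_toFinset.mp hve, Sym2.mem_toFinset.mp hvf⟩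

variable {R : Type*} [Fintype R] [DecidableEq R] {g : V → R} {s : Set V}

lemma image_map_of_injOn (hM : IsMatching M) (hg : Set.InjOn g s)
    (hMs : ∀ e ∈ M, ∀ v ∈ e, v ∈ s) : IsMatching (M.image (Sym2.map g)) := by
  refine ⟨?_, ?_⟩
  · intro e' he'
    obtain ⟨e, he, rfl⟩ := mem_image.mp he'
    exact Sym2.not_isDiag_map_of_injOn hg (hMs e he) (hM.1 e he)
  · intro e' he' f' hf' hne r ⟨hre, hrf⟩
    obtain ⟨e, he, rfl⟩ := mem_image.mp he'
    obtain ⟨f, hf, rfl⟩ := mem_image.mp hf'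
    obtain ⟨a, hae, rfl⟩ := Sym2.mem_map.mp hre
    obtain ⟨b, hbf, hba⟩ := Sym2.mem_map.mp hrf
    obtain rfl : b = a := hg (hMs f hf b hbf) (hMs e he a hae) hba
    exact hM.2 e he f hf (fun hef => hne (hef ▸ rfl)) b ⟨hae, hbf⟩

/-- Edges of `M` leaving `K` are charged to distinct vertices of `M` outside `K`. -/
lemma card_le_card_filter_add_card_sdiff (hM : IsMatching M) (K : Finset V) :
    M.card ≤
      (M.filter fun e => ∀ v ∈ e, v ∈ K).card + (M.biUnion Sym2.toFinset \ K).card := by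
  rw [← card_filter_add_card_filter_not (fun e : Sym2 V => ∀ v ∈ e, v ∈ K)]
  gcongr
  apply Finset.card_le_card_of_forall_subsingleton (fun e v => v ∈ e)
  · intro e he
    simp only [mem_filter, not_forall] at he
    obtain ⟨he, v, hve, hvK⟩ := he
    exact ⟨v, mem_sdiff.mpr ⟨mem_biUnion.mpr ⟨e, he, Sym2.mem_toFinset.mpr hve⟩, hvK⟩,
      hve⟩
  · intro v _ e ⟨he, hve⟩ f ⟨hf, hvf⟩
    by_contra hef
    exact hM.2 e (mem_filter.mp he).1 f (mem_filter.mp hf).1 hef v ⟨hve, hvf⟩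

/-- Choose `K ⊆ S` meeting every fibre of `g` on `S` once; the edges of `M` inside `K` survive
injectively as a matching of the concatenation. -/
lemma card_add_card_image_le (hM : IsMatching M) (hME : M ⊆ E) :
    M.card + ((M.biUnion Sym2.toFinset).image g).card ≤
      matchNum (E.image (Sym2.map g)) + (M.biUnion Sym2.toFinset).card := by
  set S := M.biUnion Sym2.toFinset
  obtain ⟨K, hKS, hgK, hKg⟩ := exists_subset_injOn_image_eq_of_surjOn (S : Set V) (S.image g)
    (by rw [coe_image]; exact Set.surjOn_image g S)
  set M' := M.filter fun e => ∀ v ∈ e, v ∈ K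
  have hMK : M.card ≤ M'.card + (S \ K).card := hM.card_le_card_filter_add_card_sdiff K
  have hM'K : ∀ e ∈ M', ∀ v ∈ e, v ∈ (K : Set V) := fun e he => (mem_filter.mp he).2
  have hM' : M'.card ≤ matchNum (E.image (Sym2.map g)) := by
    rw [← Sym2.card_image_map_of_injOn hgK hM'K]
    exact ((hM.mono (filter_subset _ _)).image_map_of_injOn hgK hM'K).card_le_matchNum
      (image_subset_image ((filter_subset _ _).trans hME))
  have hK : K.card = (S.image g).card := hKg ▸ (card_image_of_injOn hgK).symm
  have hSK := card_sdiff_add_card_eq_card (coe_subset.mp hKS)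
  omega

end IsMatching

lemma Finset.exists_card_biUnion_image_le_mul {V R ι : Type*} [Fintype ι] [Nonempty ι]
    [DecidableEq R] (S : Finset V) (f : V → ι → R) :
    ∃ i, (S.biUnion fun v => univ.image (f v)).card ≤
      Fintype.card ι * (S.image fun v => f v i).card := by
  obtain ⟨i, -, hi⟩ :=
    univ.exists_max_image (fun i => (S.image fun v => f v i).card) univ_nonempty
  refine ⟨i, ?_⟩
  have hcomm : (S.biUnion fun v => univ.image (f v)) =
      univ.biUnion fun i => S.image fun v => f v i := by
    ext r
    simp only [mem_biUnion, mem_image, mem_univ, true_and]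
    exact ⟨fun ⟨v, hv, j, h⟩ => ⟨j, v, hv, h⟩,
      fun ⟨j, v, hv, h⟩ => ⟨v, hv, j, h⟩⟩
  rw [hcomm, ← card_univ]
  exact card_biUnion_le_card_mul _ _ _ fun j _ => hi j (mem_univ j)

theorem stmt3_general {V R : Type*} [Fintype V] [DecidableEq V] [Fintype R] [DecidableEq R]
    (k d : ℕ) (ε : ℝ) (hd : 0 < d)
    (nbr : V → Fin d → R)
    (hexp : ∀ S : Finset V, S.card ≤ 2 * k →
      ((S.biUnion (fun v => Finset.image (nbr v) Finset.univ)).card : ℝ) ≥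
        (1 - ε / 2) * d * S.card)
    (E M : Finset (Sym2 V)) (hME : M ⊆ E) (hM : IsMatching M) (hMk : M.card = k) :
    ∃ i : Fin d,
      ((matchNum (E.image (Sym2.map (fun v => nbr v i))) : ℝ)) ≥ (1 - ε) * k := by
  have : Nonempty (Fin d) := ⟨⟨0, hd⟩⟩
  set S := M.biUnion Sym2.toFinset
  have hS : S.card = 2 * k := hMk ▸ hM.card_biUnion_toFinset
  obtain ⟨i, hi⟩ := S.exists_card_biUnion_image_le_mul nbr
  refine ⟨i, ?_⟩
  set N := (S.biUnion fun v => univ.image (nbr v)).card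
  set a := (S.image fun v => nbr v i).card
  have hmatch : (k + a : ℝ) ≤ matchNum (E.image (Sym2.map fun v => nbr v i)) + 2 * k := by
    exact_mod_cast hS ▸ hMk ▸ hM.card_add_card_image_le hME
  have hexpS := hexp S hS.le
  rw [hS, Nat.cast_mul, Nat.cast_ofNat] at hexpS
  rw [Fintype.card_fin] at hi
  have hiR : (N : ℝ) ≤ d * a := by exact_mod_cast hi
  have hdR : (0 : ℝ) < d := by exact_mod_cast hd
  have ha : (2 - ε) * k ≤ (a : ℝ) := le_of_mul_le_mul_left (by linarith) hdR
  linarith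

/-- the partitionings of `V` induced by the `d` neighbor-coordinates of a
bipartite `(2k, d, ε/2)`-expander form a `(k,ε)` matching preserving collection: every
matching of size `k` in `G` survives (up to a `(1-ε)` factor) in the concatenation of `G`
along some coordinate `i`. -/
theorem stmt3 {V R : Type*} [Fintype V] [DecidableEq V] [Fintype R] [DecidableEq R]
    (k d : ℕ) (ε : ℝ) (hd : 0 < d)
    (nbr : V → Fin d → R)
    (hdeg : ∀ v : V, Function.Injective (nbr v))
    (hexp : ∀ S : Finset V, S.card ≤ 2 * k →
      ((S.biUnion (fun v => Finset.image (nbr v) Finset.univ)).card : ℝ) ≥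
        (1 - ε / 2) * d * S.card)
    (E M : Finset (Sym2 V)) (hME : M ⊆ E) (hM : IsMatching M) (hMk : M.card = k) :
    ∃ i : Fin d,
      ((matchNum (E.image (Sym2.map (fun v => nbr v i))) : ℝ)) ≥ (1 - ε) * k :=
  stmt3_general k d ε hd nbr hexp E M hME hM hMk
end

section
/- Let M be a matching in graph G = (V,E) and V' a partitioning of V into subsets. Suppose at most t endpoints of M lie in a subset of V' containing another endpoint of M (i.e., at least 2|M| − t endpoints lie in subsets containing exactly one endpoint of M). Then the concatenation G' of G based on V' contains a matching of size at least |M| − t. -/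
/-- if at most `t` endpoints of a matching `M` share a part (under the
partitioning given by `p : V → P`) with another endpoint of `M`, then the concatenation of
`G` along `p` has a matching of size at least `|M| - t`. -/
theorem stmt5 {V P : Type*} [Fintype V] [DecidableEq V] [Fintype P] [DecidableEq P]
    (E M : Finset (Sym2 V)) (hME : M ⊆ E) (hM : IsMatching M)
    (p : V → P) (t : ℕ)
    (hbad : (Finset.univ.filter (fun v : V =>
        (∃ e ∈ M, v ∈ e) ∧ ∃ u : V, u ≠ v ∧ (∃ e ∈ M, u ∈ e) ∧ p u = p v)).card ≤ t) :
    matchNum (E.image (Sym2.map p)) + t ≥ M.card := by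
  classical
  set bad : V → Prop := fun v =>
    (∃ e ∈ M, v ∈ e) ∧ ∃ u : V, u ≠ v ∧ (∃ e ∈ M, u ∈ e) ∧ p u = p v with hbaddef
  set B : Finset V := Finset.univ.filter (fun v => bad v) with hB
  have hBt : B.card ≤ t := hbad
  set M₀ : Finset (Sym2 V) := M.filter (fun e => ∀ v ∈ e, ¬ bad v) with hM₀def
  have hM₀sub : M₀ ⊆ M := Finset.filter_subset _ _
  -- Step 1 : M.card ≤ M₀.card + t
  have hchoice : ∀ e ∈ M \ M₀, ∃ v, v ∈ e ∧ bad v := by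
    intro e he
    rw [Finset.mem_sdiff] at he
    obtain ⟨heM, heM₀⟩ := he
    by_contra h
    push_neg at h
    exact heM₀ (Finset.mem_filter.mpr ⟨heM, h⟩)
  have hcard1 : (M \ M₀).card ≤ t := by
   rcases Finset.eq_empty_or_nonempty (M \ M₀) with hemp | ⟨e₀, he₀⟩
   · simp [hemp]
   · obtain ⟨v₀, -, -⟩ := hchoice e₀ he₀
     haveI : Nonempty V := ⟨v₀⟩
     choose! f hf1 hf2 using hchoice
     have hinj : Set.InjOn f ((M \ M₀) : Set (Sym2 V)) := by
       intro e he e' he' hfe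
       by_contra hne
       simp only [Set.mem_diff, Finset.mem_coe] at he he'
       have he'' : e ∈ M \ M₀ := Finset.mem_sdiff.mpr he
       have he''' : e' ∈ M \ M₀ := Finset.mem_sdiff.mpr he'
       have h1 := hf1 e he''
       have h2 := hf1 e' he'''
       exact hM.2 e he.1 e' he'.1 hne (f e) ⟨h1, hfe ▸ h2⟩
     refine le_trans (Finset.card_le_card_of_injOn f ?_ (by simpa using hinj)) hBt
     intro e he
     exact Finset.mem_filter.mpr ⟨Finset.mem_univ _, hf2 e he⟩
  have hMcard : M.card ≤ M₀.card + t := by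
    have := Finset.card_sdiff_add_card_eq_card hM₀sub
    omega
  -- Step 2 : the image of M₀ is a matching in the concatenation
  set N : Finset (Sym2 P) := M₀.image (Sym2.map p) with hN
  have key : ∀ e ∈ M₀, ∀ e' ∈ M, ∀ a, a ∈ e → ∀ b, b ∈ e' → p a = p b → a = b := by
    intro e he e' he' a ha b hb hpq
    by_contra hab
    have hgood := (Finset.mem_filter.mp he).2 a ha
    exact hgood ⟨⟨e, hM₀sub he, ha⟩, b, fun h => hab h.symm, ⟨e', he', hb⟩, hpq.symm⟩
  have hNmatch : IsMatching N := by
    constructor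
    · intro s hs
      obtain ⟨e, he, rfl⟩ := Finset.mem_image.mp hs
      induction e using Sym2.ind with
      | _ a b =>
        rw [Sym2.map_pair_eq, Sym2.mk_isDiag_iff]
        intro hpab
        have := key _ he _ (hM₀sub he) a (Sym2.mem_mk_left a b) b (Sym2.mem_mk_right a b) hpab
        exact hM.1 _ (hM₀sub he) (Sym2.mk_isDiag_iff.mpr this)
    · intro s hs s' hs' hne v ⟨hv, hv'⟩
      obtain ⟨e, he, rfl⟩ := Finset.mem_image.mp hs
      obtain ⟨e', he', rfl⟩ := Finset.mem_image.mp hs'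
      obtain ⟨a, ha, rfl⟩ := Sym2.mem_map.mp hv
      obtain ⟨b, hb, hpb⟩ := Sym2.mem_map.mp hv'
      have hee' : e ≠ e' := fun h => hne (by rw [h])
      have : a = b := key _ he _ (hM₀sub he') a ha b hb hpb.symm
      exact hM.2 e (hM₀sub he) e' (hM₀sub he') hee' a ⟨ha, this ▸ hb⟩
  have hNcard : N.card = M₀.card := by
    rw [hN]
    apply Finset.card_image_of_injOn
    intro e he e' he' hmap
    by_contra hne
    induction e using Sym2.ind with
    | _ a b =>
      have : p a ∈ Sym2.map p e' := by rw [← hmap, Sym2.map_pair_eq]; exact Sym2.mem_mk_left _ _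
      obtain ⟨c, hc, hpc⟩ := Sym2.mem_map.mp this
      have hac : a = c := key _ he _ (hM₀sub he') a (Sym2.mem_mk_left a b) c hc hpc.symm
      exact hM.2 _ (hM₀sub he) _ (hM₀sub he') hne a ⟨Sym2.mem_mk_left a b, hac ▸ hc⟩
  have hNsub : N ⊆ E.image (Sym2.map p) :=
    Finset.image_subset_image (hM₀sub.trans hME)
  have hmn : N.card ≤ matchNum (E.image (Sym2.map p)) := by
    apply Finset.le_sup
    exact Finset.mem_filter.mpr ⟨Finset.mem_powerset.mpr hNsub, hNmatch⟩
  omega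
end

section
/- Let n ≥ k ≥ 1, 0 < ε < 1, d = ⌈8k/ε⌉, and L = ⌈512·log(n)/ε²⌉. If L vertex partitionings of an n-vertex set into d subsets are chosen independently and uniformly at random (each vertex assigned to a uniformly random subset in each partitioning), then with probability at least 1 − 1/poly(n), for every set S of 2k vertices there is a partitioning in which at least (1−ε/4)·2k subsets contain a vertex of S. Consequently the partitionings are (k,ε) matching preserving for every graph on these vertices. -/
/-!
A partitioning fails for a vertex set `S` of size `2k` only if more than `εk/2` vertices of `S`
land in a part already hit by a smaller vertex of `S`. Counting ordered `s`-tuples of such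
"repeats" bounds the number of failing partitionings by `(C(2k,2) / ((t+1-s) d))^s d^n
≤ (2/3)^s d^n` with `t ≈ εk/2`, `s ≈ εk/8`, a factorial-moment form of the Chernoff bound. A union
bound over the `C(n,2k)` sets, with `L` independent partitionings, leaves a failing fraction of
at most `1/n`. Whenever `S` is the vertex set of a matching of size `k`, the at most `εk` vertices
of `S` sharing a part with another vertex of `S` spoil at most `εk` edges, and the remaining
edges stay a matching in the concatenated graph.
-/

open Finset

section Counting

variable {α : Type*} [Fintype α] [DecidableEq α]

lemma descFactorial_card_le_card_embedding (R : Finset α) (s : ℕ) :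
    (#R).descFactorial s ≤ #{e : Fin s ↪ α | ∀ i, e i ∈ R} :=
  calc (#R).descFactorial s = #(univ : Finset (Fin s ↪ R)) := by
        rw [card_univ, Fintype.card_embedding_eq, Fintype.card_coe, Fintype.card_fin]
    _ ≤ _ := card_le_card_of_injOn (fun e => e.trans (.subtype _)) (fun e _ => by simp)
        fun e₁ _ e₂ _ h => Function.Embedding.ext fun i => Subtype.ext (DFunLike.congr_fun h i)

lemma sum_embedding_prod_le_pow (S : Finset α) (c : α → ℕ) (s : ℕ) :
    ∑ e : Fin s ↪ α with ∀ i, e i ∈ S, ∏ i, c (e i) ≤ (∑ v ∈ S, c v) ^ s := by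
  rw [sum_pow', ← sum_image (g := fun e : Fin s ↪ α => ⇑e) (f := fun p => ∏ i, c (p i))
    fun _ _ _ _ h => Function.Embedding.coe_injective h]
  refine sum_le_sum_of_subset fun p hp => ?_
  obtain ⟨e, he, rfl⟩ := mem_image.1 hp
  exact Fintype.mem_piFinset.2 (mem_filter.1 he).2

lemma card_piFinset_ite_mul_pow {γ : Type*} (T : Finset α) (A : α → Finset γ)
    (B : Finset γ) :
    #(Fintype.piFinset fun v => if v ∈ T then A v else B) * #B ^ #T =
      (∏ v ∈ T, #(A v)) * #B ^ Fintype.card α := by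
  simp only [Fintype.card_piFinset, apply_ite card, prod_ite, filter_mem_eq_inter, univ_inter,
    prod_const, mul_assoc]
  rw [filter_not, ← compl_eq_univ_sdiff, card_compl, filter_univ_mem,
    pow_sub_mul_pow _ (card_le_univ T)]

end Counting

lemma card_filter_not_forall_exists_le {ι X : Type*} [Fintype ι] [Fintype X] [DecidableEq X]
    (p : ι → Prop) [DecidablePred p] (Q : ι → X → Prop) [∀ i, DecidablePred (Q i)] (L : ℕ) :
    #{ω : Fin L → X | ¬ ∀ i, p i → ∃ j, Q i (ω j)} ≤ ∑ i with p i, #{x | ¬ Q i x} ^ L := by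
  calc _ ≤ #(({i | p i} : Finset ι).biUnion fun i => Fintype.piFinset fun _ => {x | ¬ Q i x}) :=
        card_le_card fun ω hω => by simpa using hω
    _ ≤ _ := card_biUnion_le.trans_eq (sum_congr rfl fun i _ => Fintype.card_piFinset_const _ _)

lemma mul_choose_mul_two_thirds_pow_le_one {n k s L : ℕ} {ε : ℝ} (hk : 1 ≤ k) (hn : 1 ≤ n)
    (hε : 0 < ε) (hε1 : ε < 1) (hs : ε * k / 8 ≤ s) (hL : 512 * Real.log n / ε ^ 2 ≤ L) :
    (n : ℝ) * n.choose (2 * k) * ((2 / 3) ^ s) ^ L ≤ 1 := by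
  have hn' : (1 : ℝ) ≤ n := by exact_mod_cast hn
  have hk' : (1 : ℝ) ≤ k := by exact_mod_cast hk
  have hlog := Real.log_nonneg hn'
  have hlog32 : (1 : ℝ) / 3 ≤ Real.log (3 / 2) := by
    have := Real.one_sub_inv_le_log_of_pos (x := 3 / 2) (by norm_num)
    norm_num at this ⊢; linarith
  have hsL : 3 * (2 * k + 1) * Real.log n ≤ s * L :=
    calc 3 * (2 * k + 1) * Real.log n ≤ 64 * k * Real.log n / ε := by
          rw [le_div_iff₀ hε]; nlinarith [mul_nonneg (sub_nonneg.2 hk') hlog]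
      _ = ε * k / 8 * (512 * Real.log n / ε ^ 2) := by field_simp; ring
      _ ≤ s * L := by gcongr
  have hpow : (n : ℝ) ^ (2 * k + 1) ≤ (3 / 2) ^ (s * L) := by
    rw [← Real.log_le_log_iff (by positivity) (by positivity), Real.log_pow, Real.log_pow]
    push_cast
    nlinarith [mul_le_mul_of_nonneg_left hlog32 (by positivity : (0 : ℝ) ≤ s * L)]
  have hchoose : (n : ℝ) * n.choose (2 * k) ≤ n ^ (2 * k + 1) := by
    rw [pow_succ, mul_comm]; gcongr; exact_mod_cast Nat.choose_le_pow n (2 * k)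
  rw [← pow_mul, show (2 / 3 : ℝ) = (3 / 2)⁻¹ by norm_num, inv_pow, ← div_eq_mul_inv,
    div_le_one (by positivity)]
  exact hchoose.trans hpow

section Repeats

variable {α β : Type*} [LinearOrder α] [DecidableEq β]

def repeats (S : Finset α) (f : α → β) : Finset α :=
  {v ∈ S | ∃ u ∈ S, u < v ∧ f u = f v}

lemma repeats_subset (S : Finset α) (f : α → β) : repeats S f ⊆ S :=
  filter_subset _ _

lemma card_le_card_image_add_card_repeats (S : Finset α) (f : α → β) :
    #S ≤ #(S.image f) + #(repeats S f) := by
  have hinj : Set.InjOn f ↑(S \ repeats S f) := by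
    intro u hu v hv huv
    simp only [coe_sdiff, Set.mem_sdiff, mem_coe, repeats, mem_filter, not_and, not_exists] at hu hv
    by_contra hne
    rcases lt_or_gt_of_ne hne with h | h
    · exact hv.2 hv.1 u hu.1 h huv
    · exact hu.2 hu.1 v hv.1 h huv.symm
  calc #S = #(S \ repeats S f) + #(repeats S f) :=
        (card_sdiff_add_card_eq_card (repeats_subset S f)).symm
    _ = #((S \ repeats S f).image f) + #(repeats S f) := by rw [card_image_of_injOn hinj]
    _ ≤ #(S.image f) + #(repeats S f) := by gcongr; exact sdiff_subset

lemma sum_card_filter_lt (S : Finset α) : ∑ v ∈ S, #{u ∈ S | u < v} = (#S).choose 2 := by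
  rw [← card_product_filter_lt, card_eq_sum_card_fiberwise (f := Prod.snd) (t := S)
    fun x hx => by simp_all]
  refine sum_congr rfl fun v hv =>
    card_nbij' (fun u => (u, v)) Prod.fst ?_ ?_ (fun _ _ => rfl) ?_ <;> intro x hx <;> grind

variable [Fintype α] [Fintype β]

lemma card_subset_repeats_mul_le (S T : Finset α) :
    #{f : α → β | T ⊆ repeats S f} * Fintype.card β ^ #T ≤
      (∏ v ∈ T, #{u ∈ S | u < v}) * Fintype.card β ^ Fintype.card α := by
  have hwit : ∀ (f : α → β) v, ∃ u, v ∈ repeats S f → u ∈ S ∧ u < v ∧ f u = f v := fun f v => by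
    by_cases hv : v ∈ repeats S f
    · obtain ⟨-, u, hu⟩ := mem_filter.1 hv
      exact ⟨u, fun _ => hu⟩
    · exact ⟨v, (absurd · hv)⟩
  choose w hw using hwit
  -- A function is determined by its values off `T` and by a witness `w f v < v` for each `v ∈ T`.
  let code (f : α → β) (v : α) : α ⊕ β := if v ∈ T then .inl (w f v) else .inr (f v)
  let codes : Finset (α → α ⊕ β) := Fintype.piFinset fun v =>
    if v ∈ T then {u ∈ S | u < v}.map .inl else univ.map .inr
  have hmaps : ∀ f ∈ ({f | T ⊆ repeats S f} : Finset (α → β)), code f ∈ codes := by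
    intro f hf
    refine Fintype.mem_piFinset.2 fun v => ?_
    by_cases hv : v ∈ T
    · obtain ⟨hu, huv, -⟩ := hw f v ((mem_filter.1 hf).2 hv)
      simp [code, hv, hu, huv]
    · simp [code, hv]
  have hinj : Set.InjOn code ↑({f | T ⊆ repeats S f} : Finset (α → β)) := by
    intro f₁ hf₁ f₂ hf₂ hcode
    funext v
    induction v using WellFoundedLT.induction with
    | ind v ih =>
      have hv := congrFun hcode v
      by_cases hvT : v ∈ T
      · simp only [code, if_pos hvT, Sum.inl.injEq] at hv
        obtain ⟨-, hlt, hf₁v⟩ := hw f₁ v ((mem_filter.1 hf₁).2 hvT)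
        obtain ⟨-, -, hf₂v⟩ := hw f₂ v ((mem_filter.1 hf₂).2 hvT)
        rw [← hf₁v, ← hf₂v, hv, ih _ (hv ▸ hlt)]
      · simpa [code, hvT] using hv
  have hcodes := card_piFinset_ite_mul_pow T (fun v => {u ∈ S | u < v}.map .inl)
    ((univ : Finset β).map .inr)
  simp only [card_map, card_univ] at hcodes
  calc _ ≤ #codes * Fintype.card β ^ #T := by
        gcongr; exact card_le_card_of_injOn code hmaps hinj
    _ = _ := hcodes

lemma descFactorial_mul_card_le_choose_two_pow (S : Finset α) (t s : ℕ) :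
    t.descFactorial s * #{f : α → β | t ≤ #(repeats S f)} * Fintype.card β ^ s ≤
      (#S).choose 2 ^ s * Fintype.card β ^ Fintype.card α := by
  set bad : Finset (α → β) := {f | t ≤ #(repeats S f)}
  set embs : Finset (Fin s ↪ α) := {e | ∀ i, e i ∈ S}
  let r (f : α → β) (e : Fin s ↪ α) : Prop := ∀ i, e i ∈ repeats S f
  have hbad : ∀ f ∈ bad, t.descFactorial s ≤ #(embs.bipartiteAbove r f) := fun f hf =>
    calc t.descFactorial s ≤ (#(repeats S f)).descFactorial s :=
          Nat.descFactorial_le s (mem_filter.1 hf).2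
      _ ≤ #{e : Fin s ↪ α | ∀ i, e i ∈ repeats S f} := descFactorial_card_le_card_embedding _ s
      _ ≤ #(embs.bipartiteAbove r f) := card_le_card fun e he => by
          simp only [mem_filter, mem_univ, true_and] at he
          simpa [embs, r, he] using fun i => repeats_subset S f (he i)
  have hemb : ∀ e ∈ embs, #(bad.bipartiteBelow r e) * Fintype.card β ^ s ≤
      (∏ i, #{u ∈ S | u < e i}) * Fintype.card β ^ Fintype.card α := fun e _ => by
    have h := card_subset_repeats_mul_le (β := β) S (univ.map e)
    rw [card_map, card_univ, Fintype.card_fin, prod_map] at h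
    refine le_trans (Nat.mul_le_mul_right _ (card_le_card fun f hf => ?_)) h
    simpa [subset_iff, r] using ((mem_bipartiteBelow _).1 hf).2
  calc t.descFactorial s * #bad * Fintype.card β ^ s
      ≤ (∑ f ∈ bad, #(embs.bipartiteAbove r f)) * Fintype.card β ^ s := by
        rw [mul_comm _ #bad, ← smul_eq_mul (#bad), ← sum_const]
        gcongr with f hf
        exact hbad f hf
    _ = ∑ e ∈ embs, #(bad.bipartiteBelow r e) * Fintype.card β ^ s := by
        rw [sum_card_bipartiteAbove_eq_sum_card_bipartiteBelow, sum_mul]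
    _ ≤ ∑ e ∈ embs, (∏ i, #{u ∈ S | u < e i}) * Fintype.card β ^ Fintype.card α :=
        sum_le_sum hemb
    _ ≤ (∑ v ∈ S, #{u ∈ S | u < v}) ^ s * Fintype.card β ^ Fintype.card α := by
        rw [← sum_mul]; gcongr; exact sum_embedding_prod_le_pow S (fun v => #{u ∈ S | u < v}) s
    _ = (#S).choose 2 ^ s * Fintype.card β ^ Fintype.card α := by
        rw [sum_card_filter_lt]

lemma card_image_add_le_le_pow_mul (S : Finset α) (t s : ℕ) {r : ℝ}
    (hpos : 0 < ((t + 1 - s : ℕ) : ℝ) * Fintype.card β)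
    (hr : ((#S).choose 2 : ℝ) ≤ r * (((t + 1 - s : ℕ) : ℝ) * Fintype.card β)) :
    (#{f : α → β | #(S.image f) + t ≤ #S} : ℝ) ≤ r ^ s * Fintype.card β ^ Fintype.card α := by
  set A := ((t + 1 - s : ℕ) : ℝ) * Fintype.card β
  have hsub : ({f | #(S.image f) + t ≤ #S} : Finset (α → β)) ⊆
      ({f | t ≤ #(repeats S f)} : Finset (α → β)) :=
    monotone_filter_right _ fun f _ hf => by
      have := card_le_card_image_add_card_repeats S f
      omega
  have hcount : (#{f : α → β | t ≤ #(repeats S f)} : ℝ) * A ^ s ≤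
      ((#S).choose 2 : ℝ) ^ s * Fintype.card β ^ Fintype.card α := by
    have h := descFactorial_mul_card_le_choose_two_pow (β := β) S t s
    have hfact : (t + 1 - s) ^ s ≤ t.descFactorial s := Nat.pow_sub_le_descFactorial t s
    rw [mul_pow, ← mul_assoc, mul_comm _ (((t + 1 - s : ℕ) : ℝ) ^ s)]
    exact_mod_cast le_trans (by gcongr) h
  refine le_of_mul_le_mul_right ?_ (pow_pos hpos s)
  calc _ ≤ (#{f : α → β | t ≤ #(repeats S f)} : ℝ) * A ^ s := by gcongr
    _ ≤ (r * A) ^ s * Fintype.card β ^ Fintype.card α := hcount.trans (by gcongr)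
    _ = _ := by ring

lemma card_image_lt_le_two_thirds_pow (S : Finset α) {k : ℕ} {ε : ℝ} (hk : 0 < k) (hε : 0 < ε)
    (hS : #S = 2 * k) (hβ : 8 * k / ε ≤ Fintype.card β) :
    (#{f : α → β | ¬ (#(S.image f) : ℝ) ≥ (1 - ε / 4) * (2 * k)} : ℝ) ≤
      (2 / 3) ^ ⌈ε * k / 8⌉₊ * Fintype.card β ^ Fintype.card α := by
  set t := ⌊ε * k / 2⌋₊ + 1
  set s := ⌈ε * k / 8⌉₊
  have hk' : (0 : ℝ) < k := Nat.cast_pos.2 hk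
  have ht : ε * k / 2 < t := by simpa [t] using Nat.lt_floor_add_one (ε * k / 2)
  have ht' : (t : ℝ) ≤ ε * k / 2 + 1 := by
    simpa [t] using Nat.floor_le (by positivity : 0 ≤ ε * k / 2)
  have hs : (s : ℝ) < ε * k / 8 + 1 := Nat.ceil_lt_add_one (by positivity)
  have hst : s ≤ t + 1 := by exact_mod_cast (show (s : ℝ) ≤ t + 1 by linarith)
  have hgap : 3 * ε * k / 8 ≤ ((t + 1 - s : ℕ) : ℝ) := by
    push_cast [Nat.cast_sub hst]; linarith
  have hsub : ({f | ¬ (#(S.image f) : ℝ) ≥ (1 - ε / 4) * (2 * k)} : Finset (α → β)) ⊆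
      ({f | #(S.image f) + t ≤ #S} : Finset (α → β)) :=
    monotone_filter_right _ fun f _ hf => by
      have : (#(S.image f) : ℝ) + t < 2 * k + 1 := by linarith [not_le.1 hf]
      rw [hS]; exact Nat.lt_succ_iff.1 (by exact_mod_cast this)
  refine le_trans (by exact_mod_cast card_le_card hsub)
    (card_image_add_le_le_pow_mul S t s
      (mul_pos (hgap.trans_lt' (by positivity)) (hβ.trans_lt' (by positivity))) ?_)
  calc ((#S).choose 2 : ℝ) ≤ 2 / 3 * (3 * ε * k / 8 * (8 * k / ε)) := by
        rw [Nat.cast_choose_two, hS]; field_simp; push_cast; nlinarith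
    _ ≤ _ := by gcongr

lemma card_not_forall_exists_image_mul_le {k L : ℕ} {ε : ℝ} (hk : 1 ≤ k)
    (hα : 1 ≤ Fintype.card α) (hε : 0 < ε) (hε1 : ε < 1) (hβ : 8 * k / ε ≤ Fintype.card β)
    (hL : 512 * Real.log (Fintype.card α) / ε ^ 2 ≤ L) :
    (#{ω : Fin L → α → β | ¬ ∀ S : Finset α, #S = 2 * k →
        ∃ j, (#(S.image (ω j)) : ℝ) ≥ (1 - ε / 4) * (2 * k)} : ℝ) * Fintype.card α ≤
      Fintype.card (Fin L → α → β) := by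
  have hsets : #{S : Finset α | #S = 2 * k} = (Fintype.card α).choose (2 * k) := by
    rw [show ({S | #S = 2 * k} : Finset (Finset α)) = powersetCard (2 * k) univ by ext; simp,
      card_powersetCard, card_univ]
  calc _ ≤ ((∑ S : Finset α with #S = 2 * k,
          #{f : α → β | ¬ (#(S.image f) : ℝ) ≥ (1 - ε / 4) * (2 * k)} ^ L : ℕ) : ℝ) *
            Fintype.card α := by
        gcongr
        exact card_filter_not_forall_exists_le (fun S : Finset α => #S = 2 * k)
          (fun S (f : α → β) => (#(S.image f) : ℝ) ≥ (1 - ε / 4) * (2 * k)) L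
    _ ≤ (∑ S : Finset α with #S = 2 * k,
          ((2 / 3) ^ ⌈ε * k / 8⌉₊ * (Fintype.card β : ℝ) ^ Fintype.card α) ^ L) *
            Fintype.card α := by
        push_cast
        gcongr with S hS
        exact card_image_lt_le_two_thirds_pow S hk hε (mem_filter.1 hS).2 hβ
    _ = Fintype.card α * (Fintype.card α).choose (2 * k) * ((2 / 3) ^ ⌈ε * k / 8⌉₊) ^ L *
          Fintype.card (Fin L → α → β) := by
        simp only [sum_const, hsets, Fintype.card_fun, Fintype.card_fin, nsmul_eq_mul]
        push_cast; ring
    _ ≤ Fintype.card (Fin L → α → β) :=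
        mul_le_of_le_one_left (by positivity)
          (mul_choose_mul_two_thirds_pow_le_one hk hα hε hε1 (Nat.le_ceil _) hL)

end Repeats

section Colliding

variable {α β : Type*} [DecidableEq α] [DecidableEq β]

def collidingVerts (S : Finset α) (g : α → β) : Finset α :=
  {v ∈ S | ∃ u ∈ S, u ≠ v ∧ g u = g v}

lemma card_collidingVerts_add_le (S : Finset α) (g : α → β) :
    #(collidingVerts S g) + 2 * #(S.image g) ≤ 2 * #S := by
  set C := collidingVerts S g
  have hfiber : ∀ c ∈ S.image g, #{v ∈ C | g v = c} + 2 ≤ 2 * #{v ∈ S | g v = c} := by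
    intro c hc
    obtain ⟨w, hw, rfl⟩ := mem_image.1 hc
    have hpos : 0 < #{v ∈ S | g v = g w} := card_pos.2 ⟨w, mem_filter.2 ⟨hw, rfl⟩⟩
    by_cases h2 : 2 ≤ #{v ∈ S | g v = g w}
    · have : #{v ∈ C | g v = g w} ≤ #{v ∈ S | g v = g w} :=
        card_le_card (filter_subset_filter _ (filter_subset _ _))
      omega
    · have hone : ∀ u ∈ S, ∀ v ∈ S, g u = g w → g v = g w → u = v := fun u hu v hv hgu hgv =>
        (card_le_one (s := {v ∈ S | g v = g w})).1 (by omega)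
          u (mem_filter.2 ⟨hu, hgu⟩) v (mem_filter.2 ⟨hv, hgv⟩)
      have hempty : #{v ∈ C | g v = g w} = 0 := by
        refine card_eq_zero.2 (filter_eq_empty_iff.2 fun v hv hgv => ?_)
        obtain ⟨hvS, u, huS, huv, hgu⟩ := mem_filter.1 hv
        exact huv (hone u huS v hvS (hgu.trans hgv) hgv)
      omega
  have hC : #C = ∑ c ∈ S.image g, #{v ∈ C | g v = c} :=
    card_eq_sum_card_fiberwise fun v hv => mem_image_of_mem g (mem_filter.1 hv).1
  have hS : #S = ∑ c ∈ S.image g, #{v ∈ S | g v = c} :=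
    card_eq_sum_card_fiberwise fun v hv => mem_image_of_mem g hv
  calc #C + 2 * #(S.image g) = ∑ c ∈ S.image g, (#{v ∈ C | g v = c} + 2) := by
        rw [sum_add_distrib, sum_const, smul_eq_mul, ← hC, mul_comm]
    _ ≤ ∑ c ∈ S.image g, 2 * #{v ∈ S | g v = c} := sum_le_sum hfiber
    _ = 2 * #S := by rw [← mul_sum, ← hS]

end Colliding

section Matching

variable {V W : Type*} [DecidableEq V]

def coveredVerts (M : Finset (Sym2 V)) : Finset V :=
  M.biUnion Sym2.toFinset

lemma mem_coveredVerts {M : Finset (Sym2 V)} {v : V} : v ∈ coveredVerts M ↔ ∃ e ∈ M, v ∈ e := by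
  simp [coveredVerts, Sym2.mem_toFinset]

variable [Fintype V] [Fintype W] [DecidableEq W]

lemma IsMatching.mono_s6 {M N : Finset (Sym2 V)} (hM : IsMatching M) (h : N ⊆ M) : IsMatching N :=
  ⟨fun e he => hM.1 e (h he), fun e he f hf => hM.2 e (h he) f (h hf)⟩

lemma IsMatching.card_coveredVerts {M : Finset (Sym2 V)} (hM : IsMatching M) :
    #(coveredVerts M) = 2 * #M := by
  rw [coveredVerts, card_biUnion, sum_const_nat fun e he =>
    Sym2.card_toFinset_of_not_isDiag e (hM.1 e he), mul_comm]
  intro e he f hf hef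
  refine disjoint_left.2 fun v hve hvf => hM.2 e he f hf hef v ?_
  exact ⟨Sym2.mem_toFinset.1 hve, Sym2.mem_toFinset.1 hvf⟩

lemma IsMatching.card_le_matchNum_s6 {M E : Finset (Sym2 V)} (hM : IsMatching M) (hME : M ⊆ E) :
    #M ≤ matchNum E :=
  le_sup (f := card) (mem_filter.2 ⟨mem_powerset.2 hME, hM⟩)

lemma IsMatching.image_map {M : Finset (Sym2 V)} (hM : IsMatching M) {g : V → W}
    (hg : Set.InjOn g (coveredVerts M)) :
    IsMatching (M.image (Sym2.map g)) ∧ #(M.image (Sym2.map g)) = #M := by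
  have hshare : ∀ e₁ ∈ M, ∀ e₂ ∈ M, ∀ c, c ∈ Sym2.map g e₁ → c ∈ Sym2.map g e₂ → e₁ = e₂ := by
    intro e₁ he₁ e₂ he₂ c hc₁ hc₂
    obtain ⟨u, hu, rfl⟩ := Sym2.mem_map.1 hc₁
    obtain ⟨x, hx, hxu⟩ := Sym2.mem_map.1 hc₂
    have : x = u := hg (mem_coveredVerts.2 ⟨e₂, he₂, hx⟩) (mem_coveredVerts.2 ⟨e₁, he₁, hu⟩) hxu
    by_contra hne
    exact hM.2 e₁ he₁ e₂ he₂ hne u ⟨hu, this ▸ hx⟩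
  refine ⟨⟨?_, ?_⟩, card_image_of_injOn fun e₁ he₁ e₂ he₂ h => ?_⟩
  · simp only [mem_image, forall_exists_index, and_imp, forall_apply_eq_imp_iff₂]
    intro e he hdiag
    induction e using Sym2.ind with
    | h a b =>
      rw [Sym2.map_mk, Sym2.mk_isDiag_iff] at hdiag
      have hcov := fun v (hv : v ∈ s(a, b)) => mem_coveredVerts.2 ⟨_, he, hv⟩
      exact hM.1 _ he (Sym2.mk_isDiag_iff.2
        (hg (hcov a (Sym2.mem_mk_left a b)) (hcov b (Sym2.mem_mk_right a b)) hdiag))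
  · simp only [mem_image, forall_exists_index, and_imp]
    rintro _ e₁ he₁ rfl _ e₂ he₂ rfl hne c ⟨hc₁, hc₂⟩
    exact hne (congrArg _ (hshare e₁ he₁ e₂ he₂ c hc₁ hc₂))
  · have hmem : g e₁.out.1 ∈ Sym2.map g e₁ := Sym2.mem_map.2 ⟨_, e₁.out_fst_mem, rfl⟩
    exact hshare e₁ he₁ e₂ he₂ _ hmem (h ▸ hmem)

lemma card_le_matchNum_image_map_add {E M : Finset (Sym2 V)} (hME : M ⊆ E) (hM : IsMatching M)
    (g : V → W) :
    #M ≤ matchNum (E.image (Sym2.map g)) + #(collidingVerts (coveredVerts M) g) := by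
  set C := collidingVerts (coveredVerts M) g
  set Mgood := {e ∈ M | ∀ v ∈ e, v ∉ C}
  have hbad : #{e ∈ M | ¬ ∀ v ∈ e, v ∉ C} ≤ #C := by
    refine card_le_card_of_forall_subsingleton (fun e v => v ∈ e) (fun e he => ?_)
      fun v _ e₁ he₁ e₂ he₂ => ?_
    · obtain ⟨v, hve, hvC⟩ : ∃ v ∈ e, v ∈ C := by simpa using (mem_filter.1 he).2
      exact ⟨v, hvC, hve⟩
    · simp only [Set.mem_ofPred_eq, mem_filter] at he₁ he₂
      by_contra hne
      exact hM.2 e₁ he₁.1.1 e₂ he₂.1.1 hne v ⟨he₁.2, he₂.2⟩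
  have hinj : Set.InjOn g (coveredVerts Mgood) := by
    intro u hu x hx hgux
    obtain ⟨e₁, he₁, hue₁⟩ := mem_coveredVerts.1 hu
    obtain ⟨e₂, he₂, hxe₂⟩ := mem_coveredVerts.1 hx
    obtain ⟨he₁M, hgood⟩ := mem_filter.1 he₁
    have hxS := mem_coveredVerts.2 ⟨e₂, (mem_filter.1 he₂).1, hxe₂⟩
    by_contra hne
    exact hgood u hue₁ (mem_filter.2 ⟨mem_coveredVerts.2 ⟨e₁, he₁M, hue₁⟩, x, hxS, Ne.symm hne,
      hgux.symm⟩)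
  obtain ⟨hmatch, hcard⟩ := (hM.mono_s6 (filter_subset _ M)).image_map hinj
  have hgood : #Mgood ≤ matchNum (E.image (Sym2.map g)) :=
    hcard ▸ hmatch.card_le_matchNum_s6 (image_subset_image ((filter_subset _ M).trans hME))
  have hsplit : #Mgood + #{e ∈ M | ¬ ∀ v ∈ e, v ∉ C} = #M := card_filter_add_card_filter_not _
  omega

lemma le_matchNum_image_map {E M : Finset (Sym2 V)} (hME : M ⊆ E) (hM : IsMatching M) {k : ℕ}
    (hMk : #M = k) {ε : ℝ} (g : V → W)
    (himg : (#((coveredVerts M).image g) : ℝ) ≥ (1 - ε / 4) * (2 * k)) :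
    (matchNum (E.image (Sym2.map g)) : ℝ) ≥ (1 - ε) * k := by
  have hmatch := card_le_matchNum_image_map_add hME hM g
  have hcoll := card_collidingVerts_add_le (coveredVerts M) g
  rw [hM.card_coveredVerts, hMk] at hcoll
  rw [hMk] at hmatch
  have hmatch' : (k : ℝ) ≤
      matchNum (E.image (Sym2.map g)) + #(collidingVerts (coveredVerts M) g) := by
    exact_mod_cast hmatch
  have hcoll' : (#(collidingVerts (coveredVerts M) g) : ℝ) + 2 * #((coveredVerts M).image g) ≤
      2 * (2 * k) := by
    exact_mod_cast hcoll
  linarith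

end Matching

lemma one_sub_inv_mul_card_le_card_filter {X : Type*} [Fintype X] (P : X → Prop)
    [DecidablePred P] {n : ℕ} (hn : 1 ≤ n) (h : (#{x | ¬ P x} : ℝ) * n ≤ Fintype.card X) :
    (1 - 1 / (n : ℝ)) * Fintype.card X ≤ #{x | P x} := by
  have hsplit : (#{x | P x} : ℝ) + #{x | ¬ P x} = Fintype.card X := by
    rw [← card_univ]; exact_mod_cast card_filter_add_card_filter_not _
  rw [one_sub_mul, one_div_mul_eq_div]
  linarith [(le_div_iff₀ (by exact_mod_cast hn : (0 : ℝ) < n)).2 h]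

/-- `L = ⌈512·log n/ε²⌉` independent uniformly random partitionings of an
`n`-vertex set into `d = ⌈8k/ε⌉` parts are, with probability at least `1 - 1/n`,
such that every `2k`-set of vertices is shattered into `(1-ε/4)·2k` distinct parts by some
partitioning; consequently they are `(k,ε)` matching preserving for every graph on these
vertices. -/
theorem stmt6 (n k d L : ℕ) (ε : ℝ) (hk : 1 ≤ k) (hkn : k ≤ n)
    (hε : 0 < ε) (hε1 : ε < 1)
    (hd : d = ⌈(8 * k : ℝ) / ε⌉₊)
    (hL : L = ⌈512 * Real.log n / ε ^ 2⌉₊) :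
    (1 - 1 / (n : ℝ)) * Fintype.card (Fin L → Fin n → Fin d) ≤
      Nat.card {ω : Fin L → Fin n → Fin d //
        (∀ S : Finset (Fin n), S.card = 2 * k →
          ∃ j : Fin L, ((S.image (ω j)).card : ℝ) ≥ (1 - ε / 4) * (2 * k)) ∧
        ∀ E M : Finset (Sym2 (Fin n)), M ⊆ E → IsMatching M → M.card = k →
          ∃ j : Fin L, ((matchNum (E.image (Sym2.map (ω j))) : ℝ)) ≥ (1 - ε) * k} := by
  have hn : 1 ≤ n := hk.trans hkn
  rw [Nat.card_eq_fintype_card, Fintype.card_subtype, filter_congr fun ω _ =>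
    and_iff_left_of_imp fun hS E M hME hM hMk =>
      (hS (coveredVerts M) (by rw [hM.card_coveredVerts, hMk])).imp fun _ =>
        le_matchNum_image_map hME hM hMk _]
  refine one_sub_inv_mul_card_le_card_filter _ hn ?_
  simpa using card_not_forall_exists_image_mul_le (α := Fin n) (β := Fin d) (L := L) hk
    (by simpa using hn) hε hε1 (by rw [Fintype.card_fin, hd]; exact Nat.le_ceil _)
    (by rw [Fintype.card_fin, hL]; exact Nat.le_ceil _)
end

section
/- In the balls-into-bins experiment with m balls thrown independently and uniformly into d bins, the bin occupancy indicators X_1,…,X_d (X_i = 1 iff bin i is nonempty) are negatively associated. -/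
/-- Expectation of a real random variable on a finite uniform probability space. -/
noncomputable def EA {Ω : Type*} [Fintype Ω] (f : Ω → ℝ) : ℝ :=
  (∑ ω, f ω) / Fintype.card Ω

namespace Stmt8Aux

/-- single-ball indicator vector -/
noncomputable def e {d : ℕ} (a : Fin d) : Fin d → ℝ := fun i => if a = i then 1 else 0

lemma e_nonneg {d : ℕ} (a : Fin d) : (fun _ => (0:ℝ)) ≤ e a := by
  intro i; unfold e; split <;> norm_num

/-- Single-ball negative association (zero-one lemma). -/
lemma NA_one (d : ℕ) (I0 J0 : Set (Fin d)) (hIJ : Disjoint I0 J0)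
    (G H : (Fin d → ℝ) → ℝ) (hG : Monotone G) (hH : Monotone H)
    (hGI : ∀ v w, (∀ i ∈ I0, v i = w i) → G v = G w)
    (hHJ : ∀ v w, (∀ j ∈ J0, v j = w j) → H v = H w) :
    (d : ℝ) * ∑ a : Fin d, G (e a) * H (e a) ≤
      (∑ a : Fin d, G (e a)) * (∑ a : Fin d, H (e a)) := by
  set c := G (fun _ => 0) with hc
  set b := H (fun _ => 0) with hb
  have key : ∀ a : Fin d, G (e a) * H (e a) = c * H (e a) + b * G (e a) - c * b := by
    intro a
    by_cases hA : a ∈ I0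
    · have hHa : H (e a) = b := by
        refine hHJ _ _ fun j hj => ?_
        have : a ≠ j := fun h => hIJ.ne_of_mem hA hj h
        simp [e, this]
      rw [hHa]; ring
    · have hGa : G (e a) = c := by
        refine hGI _ _ fun i hi => ?_
        have : a ≠ i := fun h => hA (h ▸ hi)
        simp [e, this]
      rw [hGa]; ring
  have hsum : ∑ a : Fin d, G (e a) * H (e a)
      = c * ∑ a : Fin d, H (e a) + b * ∑ a : Fin d, G (e a) - (d : ℝ) * (c * b) := by
    rw [Finset.sum_congr rfl (fun a _ => key a)]
    simp [Finset.sum_sub_distrib, Finset.mul_sum, Finset.sum_add_distrib, mul_comm]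
  have h1 : (d : ℝ) * c ≤ ∑ a : Fin d, G (e a) := by
    calc (d : ℝ) * c = ∑ _a : Fin d, c := by simp [mul_comm]
    _ ≤ _ := Finset.sum_le_sum fun a _ => hG (e_nonneg a)
  have h2 : (d : ℝ) * b ≤ ∑ a : Fin d, H (e a) := by
    calc (d : ℝ) * b = ∑ _a : Fin d, b := by simp [mul_comm]
    _ ≤ _ := Finset.sum_le_sum fun a _ => hH (e_nonneg a)
  rw [hsum]
  nlinarith [mul_nonneg (sub_nonneg.2 h1) (sub_nonneg.2 h2)]

/-- ball placement indicators -/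
noncomputable def B {m d : ℕ} (ω : Fin m → Fin d) : Fin m × Fin d → ℝ :=
  fun p => if ω p.1 = p.2 then 1 else 0

/-- merge a first-ball vector with the remaining balls' vector -/
noncomputable def merge {n d : ℕ} (v : Fin d → ℝ) (b : Fin n × Fin d → ℝ) :
    Fin (n + 1) × Fin d → ℝ :=
  fun p => Fin.cases (v p.2) (fun l => b (l, p.2)) p.1

lemma merge_le {n d : ℕ} {v w : Fin d → ℝ} {b b' : Fin n × Fin d → ℝ}
    (hv : v ≤ w) (hb : b ≤ b') : merge v b ≤ merge w b' := by
  rintro ⟨l, i⟩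
  induction l using Fin.cases with
  | zero => simpa [merge] using hv i
  | succ l => simpa [merge] using hb (l, i)

lemma B_cons {n d : ℕ} (a : Fin d) (ω' : Fin n → Fin d) :
    B (Fin.cons a ω') = merge (e a) (B ω') := by
  funext p
  rcases p with ⟨l, i⟩
  induction l using Fin.cases with
  | zero => simp [B, merge, e]
  | succ l => simp [B, merge]

/-- Negative association of the single-ball placement indicators for `m` balls. -/
lemma NA_balls : ∀ (m d : ℕ) (S T : Set (Fin m × Fin d)), Disjoint S T →
    ∀ (G H : (Fin m × Fin d → ℝ) → ℝ), Monotone G → Monotone H →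
    (∀ b b', (∀ p ∈ S, b p = b' p) → G b = G b') →
    (∀ b b', (∀ p ∈ T, b p = b' p) → H b = H b') →
    (d : ℝ) ^ m * ∑ ω : Fin m → Fin d, G (B ω) * H (B ω) ≤
      (∑ ω : Fin m → Fin d, G (B ω)) * (∑ ω : Fin m → Fin d, H (B ω)) := by
  intro m
  induction m with
  | zero =>
    intro d S T _ G H _ _ _ _
    have huniq : ∀ f : (Fin 0 → Fin d) → ℝ, ∑ ω : Fin 0 → Fin d, f ω = f finZeroElim := by
      intro f
      exact Fintype.sum_unique f
    rw [huniq, huniq, huniq]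
    simp
  | succ n ih =>
    intro d S T hST G H hG hH hGS hHT
    -- reindexing of sums
    have key : ∀ f : (Fin (n + 1) → Fin d) → ℝ,
        ∑ ω : Fin (n + 1) → Fin d, f ω
          = ∑ a : Fin d, ∑ ω' : Fin n → Fin d, f (Fin.cons a ω') := by
      intro f
      rw [← Equiv.sum_comp (Fin.consEquiv (fun _ : Fin (n + 1) => Fin d)) f,
        Fintype.sum_prod_type]
      rfl
    -- inner (IH) step, for each fixed first ball position a
    have inner : ∀ a : Fin d,
        (d : ℝ) ^ n * ∑ ω' : Fin n → Fin d,
            G (merge (e a) (B ω')) * H (merge (e a) (B ω'))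
          ≤ (∑ ω' : Fin n → Fin d, G (merge (e a) (B ω'))) *
            (∑ ω' : Fin n → Fin d, H (merge (e a) (B ω'))) := by
      intro a
      refine ih d ((fun p : Fin n × Fin d => ((p.1.succ : Fin (n+1)), p.2)) ⁻¹' S)
        ((fun p : Fin n × Fin d => ((p.1.succ : Fin (n+1)), p.2)) ⁻¹' T)
        (hST.preimage _)
        (fun b => G (merge (e a) b)) (fun b => H (merge (e a) b))
        (fun b b' hbb => hG (merge_le le_rfl hbb))
        (fun b b' hbb => hH (merge_le le_rfl hbb)) ?_ ?_
      · intro b b' hag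
        refine hGS _ _ fun p hp => ?_
        rcases p with ⟨l, i⟩
        induction l using Fin.cases with
        | zero => simp [merge]
        | succ l => simpa [merge] using hag (l, i) hp
      · intro b b' hag
        refine hHT _ _ fun p hp => ?_
        rcases p with ⟨l, i⟩
        induction l using Fin.cases with
        | zero => simp [merge]
        | succ l => simpa [merge] using hag (l, i) hp
    -- outer step
    set SG : (Fin d → ℝ) → ℝ := fun v => ∑ ω' : Fin n → Fin d, G (merge v (B ω')) with hSG
    set SH : (Fin d → ℝ) → ℝ := fun v => ∑ ω' : Fin n → Fin d, H (merge v (B ω')) with hSH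
    have outer : (d : ℝ) * ∑ a : Fin d, SG (e a) * SH (e a) ≤
        (∑ a : Fin d, SG (e a)) * (∑ a : Fin d, SH (e a)) := by
      refine NA_one d {i | ((0 : Fin (n+1)), i) ∈ S} {i | ((0 : Fin (n+1)), i) ∈ T} ?_
        SG SH ?_ ?_ ?_ ?_
      · exact Set.disjoint_left.2 fun i hiS hiT =>
          (Set.disjoint_left.1 hST) hiS hiT
      · intro v w hvw
        exact Finset.sum_le_sum fun ω' _ => hG (merge_le hvw le_rfl)
      · intro v w hvw
        exact Finset.sum_le_sum fun ω' _ => hH (merge_le hvw le_rfl)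
      · intro v w hvw
        refine Finset.sum_congr rfl fun ω' _ => hGS _ _ fun p hp => ?_
        rcases p with ⟨l, i⟩
        induction l using Fin.cases with
        | zero => simpa [merge] using hvw i hp
        | succ l => simp [merge]
      · intro v w hvw
        refine Finset.sum_congr rfl fun ω' _ => hHT _ _ fun p hp => ?_
        rcases p with ⟨l, i⟩
        induction l using Fin.cases with
        | zero => simpa [merge] using hvw i hp
        | succ l => simp [merge]
    -- assemble
    have hdn : (0:ℝ) ≤ (d:ℝ) := by positivity
    calc (d : ℝ) ^ (n + 1) * ∑ ω : Fin (n + 1) → Fin d, G (B ω) * H (B ω)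
        = (d:ℝ) * ∑ a : Fin d, ((d:ℝ)^n *
            ∑ ω' : Fin n → Fin d, G (merge (e a) (B ω')) * H (merge (e a) (B ω'))) := by
          rw [key]
          simp only [B_cons]
          rw [Finset.mul_sum, Finset.mul_sum]
          exact Finset.sum_congr rfl fun a _ => by ring
      _ ≤ (d:ℝ) * ∑ a : Fin d, SG (e a) * SH (e a) := by
          refine mul_le_mul_of_nonneg_left (Finset.sum_le_sum fun a _ => inner a) hdn
      _ ≤ (∑ a : Fin d, SG (e a)) * (∑ a : Fin d, SH (e a)) := outer
      _ = (∑ ω : Fin (n + 1) → Fin d, G (B ω)) * (∑ ω : Fin (n + 1) → Fin d, H (B ω)) := by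
          rw [key (fun ω => G (B ω)), key (fun ω => H (B ω))]
          simp only [B_cons, hSG, hSH]

end Stmt8Aux

open Stmt8Aux in
/-- in the balls-into-bins experiment with `m` balls thrown uniformly and
independently into `d` bins, the bin occupancy indicators `X i = 1_{bin i nonempty}`
are negatively associated: for any disjoint index sets `I, J` and monotone functions
`g, h` depending only on the coordinates in `I` resp. `J`,
`E[g(X)·h(X)] ≤ E[g(X)]·E[h(X)]`. -/
theorem stmt8 (m d : ℕ) (I J : Finset (Fin d)) (hIJ : Disjoint I J)
    (g h : (Fin d → ℝ) → ℝ) (hg : Monotone g) (hh : Monotone h)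
    (hgI : ∀ x y : Fin d → ℝ, (∀ i ∈ I, x i = y i) → g x = g y)
    (hhJ : ∀ x y : Fin d → ℝ, (∀ j ∈ J, x j = y j) → h x = h y) :
    EA (fun ω : Fin m → Fin d =>
        g (fun i => if ∃ l, ω l = i then (1 : ℝ) else 0) *
          h (fun i => if ∃ l, ω l = i then (1 : ℝ) else 0)) ≤
      EA (fun ω : Fin m → Fin d => g (fun i => if ∃ l, ω l = i then (1 : ℝ) else 0)) *
        EA (fun ω : Fin m → Fin d => h (fun i => if ∃ l, ω l = i then (1 : ℝ) else 0)) := by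
  classical
  -- the occupancy map as a monotone function of the ball indicators
  set Φ : (Fin m × Fin d → ℝ) → (Fin d → ℝ) :=
    fun b i => min 1 (∑ l : Fin m, b (l, i)) with hΦ
  have hΦmono : Monotone Φ := by
    intro b b' hbb i
    exact min_le_min le_rfl (Finset.sum_le_sum fun l _ => hbb (l, i))
  have hX : ∀ ω : Fin m → Fin d,
      Φ (B ω) = fun i => if ∃ l, ω l = i then (1 : ℝ) else 0 := by
    intro ω
    funext i
    by_cases hex : ∃ l, ω l = i
    · obtain ⟨l0, hl0⟩ := hex
      have h1 : (1:ℝ) ≤ ∑ l : Fin m, B ω (l, i) := by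
        have := Finset.single_le_sum (f := fun l : Fin m => B ω (l, i))
          (fun l _ => by simp only [B]; split <;> norm_num) (Finset.mem_univ l0)
        simpa [B, hl0] using this
      simp only [Φ, hΦ]
      rw [min_eq_left h1, if_pos ⟨l0, hl0⟩]
    · push_neg at hex
      have : ∑ l : Fin m, B ω (l, i) = 0 := by
        refine Finset.sum_eq_zero fun l _ => ?_
        simp [B, hex l]
      simp only [Φ, hΦ, this]
      rw [if_neg (by push_neg; exact hex)]
      simp
  have main := NA_balls m d {p | p.2 ∈ I} {p | p.2 ∈ J}
    (by
      refine Set.disjoint_left.2 fun p hpI hpJ => ?_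
      exact (Finset.disjoint_left.1 hIJ) hpI hpJ)
    (fun b => g (Φ b)) (fun b => h (Φ b))
    (fun b b' hbb => hg (hΦmono hbb)) (fun b b' hbb => hh (hΦmono hbb))
    (fun b b' hag => hgI _ _ fun i hi =>
      congrArg (min 1) (Finset.sum_congr rfl fun l _ => hag (l, i) hi))
    (fun b b' hag => hhJ _ _ fun j hj =>
      congrArg (min 1) (Finset.sum_congr rfl fun l _ => hag (l, j) hj))
  simp only [hX] at main
  -- now rewrite EA
  have hcard : (Fintype.card (Fin m → Fin d) : ℝ) = (d : ℝ) ^ m := by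
    simp [Fintype.card_fun]
  unfold EA
  rw [hcard]
  rcases eq_or_lt_of_le (show (0:ℝ) ≤ (d:ℝ)^m by positivity) with h0 | hpos
  · -- degenerate case: d = 0 and m > 0, the sample space is empty
    have hd : d = 0 := by
      rcases Nat.eq_zero_or_pos d with h | h
      · exact h
      · exfalso
        have : (0:ℝ) < (d:ℝ)^m := pow_pos (by exact_mod_cast h) m
        linarith
    have hm : m ≠ 0 := by
      rintro rfl
      simp at h0
    have hempty : IsEmpty (Fin m → Fin d) := by
      subst hd
      exact ⟨fun f => (f ⟨0, Nat.pos_of_ne_zero hm⟩).elim0⟩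
    rw [Finset.univ_eq_empty (α := Fin m → Fin d)]
    simp
  · rw [div_mul_div_comm, div_le_div_iff₀ hpos (by positivity)]
    nlinarith [main, hpos.le, mul_le_mul_of_nonneg_left main hpos.le]
end
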